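/- Let R be the valuation ring of a field K complete with respect to a non-discrete rank-1 valuation w, with maximal ideal 𝔪. Suppose f ∈ R[[X]] satisfies w(f) = 0 and all coefficients of f lie in 𝔪. Then there exists a monic irreducible polynomial q(X) ∈ R[X] of positive degree with constant term q₀ ∈ 𝔪, such that q divides f in R[[X]], and the quotient g = f/q again satisfies w(g) = 0 with all coefficients in 𝔪. -/

import Mathlib

open PowerSeries Filter Set

/-- An additive rank-1 (real-valued) non-archimedean valuation on a field `K`,
with values in `EReal` (real numbers on nonzero elements, `⊤` at `0`). -/
structure AddRealValuation (K : Type*) [Field K] where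
  w : K → EReal
  map_zero' : w 0 = ⊤
  finite' : ∀ x : K, x ≠ 0 → ∃ r : ℝ, w x = (r : EReal)
  map_one' : w 1 = 0
  map_mul' : ∀ x y : K, w (x * y) = w x + w y
  map_neg' : ∀ x : K, w (-x) = w x
  add_le' : ∀ x y : K, min (w x) (w y) ≤ w (x + y)

namespace AddRealValuation

variable {K : Type*} [Field K] (v : AddRealValuation K)

/-- The valuation is non-discrete: there exist elements of arbitrarily
small positive valuation. -/
def Nondiscrete : Prop := ∀ ε : ℝ, 0 < ε → ∃ x : K, 0 < v.w x ∧ v.w x < (ε : EReal)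

/-- `K` is complete with respect to `v`: every Cauchy sequence converges. -/
def IsComplete : Prop :=
  ∀ u : ℕ → K, (∀ M : ℝ, ∃ N : ℕ, ∀ m ≥ N, ∀ n ≥ N, (M : EReal) ≤ v.w (u m - u n)) →
    ∃ L : K, ∀ M : ℝ, ∃ N : ℕ, ∀ n ≥ N, (M : EReal) ≤ v.w (u n - L)

/-- The valuation ring `R = {x : K | w x ≥ 0}` of `v`. -/
def subring : Subring K where
  carrier := {x | 0 ≤ v.w x}
  zero_mem' := by show (0:EReal) ≤ v.w 0; rw [v.map_zero']; exact le_top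
  one_mem' := by show (0:EReal) ≤ v.w 1; rw [v.map_one']
  add_mem' := fun hx hy => le_trans (le_min hx hy) (v.add_le' _ _)
  mul_mem' := fun hx hy => by
    show (0:EReal) ≤ v.w _; rw [v.map_mul']; exact add_nonneg hx hy
  neg_mem' := fun {x} hx => by show (0:EReal) ≤ v.w (-x); rw [v.map_neg']; exact hx

/-- The extension of `v` to power series over `K`: the infimum of the
valuations of the coefficients. -/
noncomputable def wS (f : PowerSeries K) : EReal := ⨅ i : ℕ, v.w (PowerSeries.coeff (R := K) i f)

/-- The extension of `v` to power series over the valuation ring `R` of `v`. -/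
noncomputable def wR (f : PowerSeries v.subring) : EReal :=
  ⨅ i : ℕ, v.w ((PowerSeries.coeff (R := v.subring) i f : v.subring) : K)

/-- `f` is a convergent power series (lies in the Tate algebra `K{X}`):
the valuations of the coefficients tend to `∞`. -/
def Conv (f : PowerSeries K) : Prop :=
  ∀ M : ℝ, ∃ N : ℕ, ∀ i ≥ N, (M : EReal) ≤ v.w (PowerSeries.coeff (R := K) i f)

/-- The series `f(c) = Σ fᵢ cⁱ` (with `f` over the valuation ring `R`) converges to `0`:
the valuations of the partial sums tend to `∞`. -/
def EvalZeroR (f : PowerSeries v.subring) (c : v.subring) : Prop :=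
  ∀ M : ℝ, ∃ N : ℕ, ∀ n ≥ N,
    (M : EReal) ≤ v.w ((∑ i ∈ Finset.range n, PowerSeries.coeff (R := v.subring) i f * c ^ i : v.subring) : K)

end AddRealValuation

/-- `𝓕` is a defining family of rank-1 valuations exhibiting the domain `D`
(with fraction field `F`) as a generalized Krull domain:
(a) for each `v ∈ 𝓕` the valuation ring of `v` is the localization of `D`
at the prime `{a : v a > 0}`; (b) `⋂ D_v = D`; (c) each nonzero `a ∈ D`
satisfies `v a = 0` for all but finitely many `v ∈ 𝓕`. -/
def IsGKFamily (D : Type*) [CommRing D] [IsDomain D] (F : Type*) [Field F]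
    [Algebra D F] [IsFractionRing D F] (𝓕 : Set (AddRealValuation F)) : Prop :=
  (∀ u ∈ 𝓕, ∀ x : F, 0 ≤ u.w x ↔
    ∃ a b : D, b ≠ 0 ∧ ¬ 0 < u.w (algebraMap D F b) ∧ x * algebraMap D F b = algebraMap D F a) ∧
  (∀ x : F, (∀ u ∈ 𝓕, 0 ≤ u.w x) → ∃ a : D, x = algebraMap D F a) ∧
  (∀ a : D, a ≠ 0 → {u ∈ 𝓕 | u.w (algebraMap D F a) ≠ 0}.Finite)

/-!
Since `w(f) = 0` while every coefficient of `f` has positive valuation, the Newton polygon of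
`f` has a vertex `(d, w(F_d))` with `d > 0` and a supporting line of slope `-r` that all other
points clear by some `δ > 0`. For such a vertex, completeness of `K` gives a Weierstrass-type
factorization `f = q g` with `q = X^d + ∑_{l<d} uₗ Xˡ` and `w(uₗ) ≥ (d - l) r`: the vector `u`
is the fixed point of a contraction, `g` being the quotient `f / q` expanded in powers of `X⁻¹`.
As `q(0) ∈ 𝔪` and `𝔪` is prime, some monic irreducible factor of `q` has its constant term in
`𝔪`. Reducing modulo `𝔪` shows that the cofactor has all coefficients in `𝔪`, and its valuation
lies between `0` and `w(f) = 0`.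
-/

section NewtonPolygon

/-- `D` is the largest minimiser of `ψ` on `S`. -/
lemma exists_isolated_min_sub_mul (S : Finset ℕ) (hS : S.Nonempty) (ψ : ℕ → ℝ) {ε₀ : ℝ}
    (hε₀ : 0 < ε₀) : ∃ D ∈ S, ∃ ε δ : ℝ, 0 < ε ∧ ε ≤ ε₀ ∧ 0 < δ ∧
      ∀ j ∈ S, j ≠ D → ψ D - D * ε + δ ≤ ψ j - j * ε := by
  obtain ⟨m, hmS, hmin⟩ := S.exists_min_image ψ hS
  obtain ⟨γ, hγ, hgap⟩ : ∃ γ > 0, ∀ j ∈ S, ψ j ≠ ψ m → ψ m + γ ≤ ψ j := by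
    rcases (S.filter (ψ · ≠ ψ m)).eq_empty_or_nonempty with h | h
    · refine ⟨1, one_pos, fun j hj hne => ?_⟩
      have : j ∈ S.filter (ψ · ≠ ψ m) := Finset.mem_filter.mpr ⟨hj, hne⟩
      simp [h] at this
    · obtain ⟨j₀, hj₀, hj₀min⟩ := (S.filter (ψ · ≠ ψ m)).exists_min_image ψ h
      obtain ⟨hj₀S, hj₀m⟩ := Finset.mem_filter.mp hj₀
      refine ⟨ψ j₀ - ψ m, sub_pos.mpr ((hmin j₀ hj₀S).lt_of_ne' hj₀m), fun j hj hne => ?_⟩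
      linarith [hj₀min j (Finset.mem_filter.mpr ⟨hj, hne⟩)]
  set M := S.filter (ψ · = ψ m)
  have hM : M.Nonempty := ⟨m, Finset.mem_filter.mpr ⟨hmS, rfl⟩⟩
  obtain ⟨hDS, hDm⟩ := Finset.mem_filter.mp (M.max'_mem hM)
  set B := S.sup id
  have hB : ∀ j ∈ S, (j : ℝ) ≤ B := fun j hj => by exact_mod_cast Finset.le_sup (f := id) hj
  set ε := min ε₀ (γ / (2 * (B + 1)))
  have hε : 0 < ε := lt_min hε₀ (by positivity)
  have hεB : B * ε ≤ γ / 2 := by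
    have h := min_le_right ε₀ (γ / (2 * (B + 1)))
    rw [le_div_iff₀ (by positivity)] at h
    nlinarith
  refine ⟨M.max' hM, hDS, ε, min ε (γ / 2), hε, min_le_left _ _, lt_min hε (by positivity),
    fun j hj hjD => ?_⟩
  have hδε := min_le_left ε (γ / 2)
  have hδγ := min_le_right ε (γ / 2)
  by_cases hjm : ψ j = ψ m
  · have hjD' : (j : ℝ) + 1 ≤ M.max' hM := by
      exact_mod_cast (M.le_max' j (Finset.mem_filter.mpr ⟨hj, hjm⟩)).lt_of_ne hjD
    nlinarith
  · have := hgap j hj hjm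
    nlinarith [hB j hj, hB _ hDS, (Nat.cast_nonneg (M.max' hM) : (0 : ℝ) ≤ _)]

/-- Choose `r₀` so that some `j₁ > 0` beats `j = 0` for `j ↦ t j + j r₀`, minimise over the
window `j ≤ B` beyond which the linear term alone is too large, and tilt the slope slightly to
make the minimiser strict. -/
lemma exists_isolated_min_add_mul (t : ℕ → ℝ) (hpos : ∀ j, 0 < t j)
    (hinf : ∀ ε > 0, ∃ j, t j < ε) :
    ∃ (d : ℕ) (r δ : ℝ), 0 < d ∧ 0 < r ∧ 0 < δ ∧ ∀ j ≠ d, t d + d * r + δ ≤ t j + j * r := by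
  obtain ⟨j₁, hj₁⟩ := hinf (t 0) (hpos 0)
  have hj₁0 : 0 < j₁ := Nat.pos_of_ne_zero fun h => by subst h; exact lt_irrefl _ hj₁
  have hj₁R : (0 : ℝ) < j₁ := by exact_mod_cast hj₁0
  set r₀ := (t 0 - t j₁) / (2 * j₁)
  have hr₀ : 0 < r₀ := div_pos (by linarith) (by positivity)
  have hA : t j₁ + j₁ * r₀ < t 0 := by
    have : j₁ * r₀ = (t 0 - t j₁) / 2 := by simp only [r₀]; field_simp
    linarith
  set B := ⌈(t 0 + 1) / (r₀ / 2)⌉₊ + j₁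
  have hfar : ∀ j, B < j → t 0 + 1 ≤ j * (r₀ / 2) := by
    intro j hj
    have h := (Nat.le_ceil ((t 0 + 1) / (r₀ / 2))).trans
      (show (⌈(t 0 + 1) / (r₀ / 2)⌉₊ : ℝ) ≤ j by exact_mod_cast (by omega : _ ≤ j))
    rwa [div_le_iff₀ (by positivity)] at h
  obtain ⟨D, hDS, ε, δ, hε, hεr₀, hδ, hstrict⟩ :=
    exists_isolated_min_sub_mul (Finset.range (B + 1)) Finset.nonempty_range_add_one
      (fun j => t j + j * r₀) (half_pos hr₀)
  have hnear : ∀ j ≤ B, j ≠ D → t D + D * (r₀ - ε) + δ ≤ t j + j * (r₀ - ε) := fun j hj hjD => by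
    have := hstrict j (Finset.mem_range.mpr (by omega)) hjD
    linarith
  have hj₁B : j₁ ≤ B := by omega
  have hDj₁ : t D + D * (r₀ - ε) ≤ t j₁ + j₁ * (r₀ - ε) := by
    rcases eq_or_ne j₁ D with h | h
    · rw [h]
    · linarith [hnear j₁ hj₁B h]
  have hj₁r : t j₁ + j₁ * (r₀ - ε) < t 0 := by nlinarith
  refine ⟨D, r₀ - ε, min δ 1, Nat.pos_of_ne_zero fun hD => ?_, by linarith, lt_min hδ one_pos,
    fun j hjD => ?_⟩
  · have := hnear j₁ hj₁B (by omega)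
    rw [hD] at this
    push_cast at this
    linarith
  · have hδ1 := min_le_left δ 1
    have hδ1' := min_le_right δ 1
    rcases le_or_gt j B with hj | hj
    · linarith [hnear j hj hjD]
    · nlinarith [hfar j hj, hpos j, (Nat.cast_nonneg j : (0 : ℝ) ≤ j)]

end NewtonPolygon

namespace Polynomial

variable {R : Type*} [CommRing R]

noncomputable def monicOf (u : ℕ → R) (d : ℕ) : R[X] :=
  X ^ d + ∑ l ∈ Finset.range d, C (u l) * X ^ l

lemma coeff_monicOf (u : ℕ → R) (d j : ℕ) :
    (monicOf u d).coeff j = if j = d then 1 else if j < d then u j else 0 := by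
  simp only [monicOf, coeff_add, coeff_X_pow, finsetSum_coeff, coeff_C_mul_X_pow,
    Finset.sum_ite_eq, Finset.mem_range]
  split_ifs <;> first | omega | simp

lemma monic_monicOf [Nontrivial R] (u : ℕ → R) (d : ℕ) : (monicOf u d).Monic := by
  refine monic_X_pow_add ?_
  rw [Finset.sum_range (fun l => C (u l) * X ^ l)]
  exact degree_sum_fin_lt fun l => u l

lemma map_monicOf {S : Type*} [CommRing S] (f : R →+* S) (u : ℕ → R) (d : ℕ) :
    (monicOf u d).map f = monicOf (f ∘ u) d := by
  simp [monicOf, Polynomial.map_sum]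

lemma coeff_reflect_monicOf (u : ℕ → R) (d k : ℕ) :
    (reflect d (monicOf u d)).coeff k = if k = 0 then 1 else if k ≤ d then u (d - k) else 0 := by
  rw [coeff_reflect, coeff_monicOf]
  rcases le_or_gt k d with hk | hk
  · rw [revAt_le hk]
    split_ifs <;> first | omega | rfl
  · rw [revAt_eq_self_of_lt hk]
    split_ifs <;> first | omega | rfl

lemma natDegree_monicOf_le (u : ℕ → R) (d : ℕ) : (monicOf u d).natDegree ≤ d :=
  natDegree_le_iff_coeff_eq_zero.mpr fun j hj => by
    rw [coeff_monicOf, if_neg (by exact_mod_cast hj.ne'), if_neg (by exact_mod_cast hj.not_gt)]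

lemma coeff_coe_monicOf_mul_of_lt (u : ℕ → R) {d n : ℕ} (hn : n < d) (G : R⟦X⟧) :
    PowerSeries.coeff n ((monicOf u d : R⟦X⟧) * G) =
      PowerSeries.coeff n (PowerSeries.mk u * G) := by
  simp only [PowerSeries.coeff_mul]
  refine Finset.sum_congr rfl fun p hp => ?_
  have := Finset.HasAntidiagonal.mem_antidiagonal.mp hp
  rw [coeff_coe, coeff_monicOf, if_neg (by omega), if_pos (by omega), PowerSeries.coeff_mk]

lemma Monic.exists_irreducible_dvd_coeff_zero_mem [IsDomain R] {P : Ideal R} [P.IsPrime]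
    {q : R[X]} (hq : q.Monic) (h0 : q.coeff 0 ∈ P) :
    ∃ p : R[X], p.Monic ∧ Irreducible p ∧ p.coeff 0 ∈ P ∧ p ∣ q := by
  induction hn : q.natDegree using Nat.strong_induction_on generalizing q with
  | _ n ih =>
    by_cases hirr : Irreducible q
    · exact ⟨q, hq, hirr, h0, dvd_rfl⟩
    have hq1 : q ≠ 1 := by
      rintro rfl
      exact (Ideal.IsPrime.ne_top ‹_›) ((Ideal.eq_top_iff_one P).mpr (by simpa using h0))
    rw [hq.irreducible_iff_natDegree] at hirr
    push Not at hirr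
    obtain ⟨f, g, hf, hg, rfl, hf0, hg0⟩ := hirr hq1
    rw [hf.natDegree_mul hg] at hn
    rw [mul_coeff_zero] at h0
    rcases Ideal.IsPrime.mem_or_mem ‹_› h0 with h | h
    · obtain ⟨p, hp⟩ := ih _ (by omega) hf h rfl
      exact ⟨p, hp.1, hp.2.1, hp.2.2.1, dvd_mul_of_dvd_left hp.2.2.2 g⟩
    · obtain ⟨p, hp⟩ := ih _ (by omega) hg h rfl
      exact ⟨p, hp.1, hp.2.1, hp.2.2.1, dvd_mul_of_dvd_right hp.2.2.2 f⟩

lemma Monic.natDegree_pos_of_irreducible {p : R[X]} (hp : p.Monic) (hirr : Irreducible p) :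
    0 < p.natDegree :=
  Nat.pos_of_ne_zero fun h => hirr.not_isUnit ((hp.natDegree_eq_zero.mp h) ▸ isUnit_one)

lemma coeff_coe_mul_eq_sum_reflect {p : R[X]} {d n : ℕ} (hp : p.natDegree ≤ d) (hn : d ≤ n)
    (G : R⟦X⟧) :
    PowerSeries.coeff n ((p : R⟦X⟧) * G) =
      ∑ k ∈ Finset.range (d + 1),
        PowerSeries.coeff k (reflect d p : R⟦X⟧) * PowerSeries.coeff (n - d + k) G := by
  rw [PowerSeries.coeff_mul, Finset.Nat.sum_antidiagonal_eq_sum_range_succ_mk,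
    ← Finset.sum_subset (Finset.range_subset_range.mpr (by omega : d + 1 ≤ n + 1))]
  · rw [← Finset.sum_range_reflect]
    refine Finset.sum_congr rfl fun k hk => ?_
    have hk := Finset.mem_range.mp hk
    rw [coeff_coe, coeff_coe, coeff_reflect, revAt_le (show k ≤ d by omega)]
    dsimp only
    congr 3; omega
  · intro k _ hk
    rw [coeff_coe, coeff_eq_zero_of_natDegree_lt (by simp at hk; omega), zero_mul]

end Polynomial

lemma PowerSeries.coeff_mem_of_monic_mul {R : Type*} [CommRing R] {P : Ideal R} [P.IsPrime]
    {p : Polynomial R} (hp : p.Monic) {g : R⟦X⟧} (h : ∀ n, coeff n ((p : R⟦X⟧) * g) ∈ P)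
    (n : ℕ) : coeff n g ∈ P := by
  set π := PowerSeries.map (Ideal.Quotient.mk P)
  have hpg : π p * π g = 0 := by
    rw [← map_mul]
    ext n
    rw [PowerSeries.coeff_map, map_zero, Ideal.Quotient.eq_zero_iff_mem]
    exact h n
  have hp0 : π p ≠ 0 := fun h0 => by
    have := congrArg (coeff p.natDegree) h0
    simp [π, Polynomial.coeff_coe, hp.coeff_natDegree] at this
  have hg := (mul_eq_zero.mp hpg).resolve_left hp0
  simpa [π, Ideal.Quotient.eq_zero_iff_mem] using congrArg (coeff n) hg

/-- Truncating `∑ₘ a_{k+m} Sₘ` at `m < N + d + 1 - k` turns `∑ₖ Vₖ (∑ₘ a_{k+m} Sₘ)` into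
`∑_{p ≤ N + d} a_p (V S)_p` exactly. -/
lemma PowerSeries.sum_coeff_mul_sum_range_eq {R : Type*} [CommRing R] {V S : R⟦X⟧}
    (hVS : V * S = 1) {d : ℕ} (hV : ∀ k, d < k → coeff k V = 0) (a : ℕ → R) (N : ℕ) :
    ∑ k ∈ Finset.range (d + 1),
      coeff k V * ∑ m ∈ Finset.range (N + (d + 1 - k)), a (k + m) * coeff m S = a 0 := by
  have hdiag := Finset.sum_range_diag_flip (N + d + 1)
    (fun k m => coeff k V * (a (k + m) * coeff m S))
  have hleft : ∀ p, ∑ k ∈ Finset.range (p + 1), coeff k V * (a (k + (p - k)) * coeff (p - k) S)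
      = if p = 0 then a 0 else 0 := by
    intro p
    have hp := congrArg (coeff p) hVS
    rw [coeff_mul, Finset.Nat.sum_antidiagonal_eq_sum_range_succ_mk, coeff_one] at hp
    dsimp only at hp
    calc _ = a p * ∑ k ∈ Finset.range (p + 1), coeff k V * coeff (p - k) S := by
          rw [Finset.mul_sum]
          refine Finset.sum_congr rfl fun k hk => ?_
          rw [Nat.add_sub_cancel' (Nat.le_of_lt_succ (Finset.mem_range.mp hk))]
          ring
      _ = _ := by rw [hp]; split_ifs with h <;> simp [h]
  rw [Finset.sum_congr rfl fun p _ => hleft p, Finset.sum_ite_eq' _ 0, if_pos (by simp)] at hdiag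
  rw [hdiag, ← Finset.sum_subset (Finset.range_subset_range.mpr (by omega : d + 1 ≤ N + d + 1))]
  · refine Finset.sum_congr rfl fun k hk => ?_
    rw [Finset.mul_sum, show N + d + 1 - k = N + (d + 1 - k) by
      have := Finset.mem_range.mp hk; omega]
  · intro k _ hk
    simp [hV k (by simpa using hk)]

namespace AddRealValuation

variable {K : Type*} [Field K] (v : AddRealValuation K)

section Basic

lemma eq_zero_of_forall_le_w {x : K} (h : ∀ M : ℝ, (M : EReal) ≤ v.w x) : x = 0 := by
  by_contra hx
  obtain ⟨r, hr⟩ := v.finite' x hx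
  have := h (r + 1)
  rw [hr, EReal.coe_le_coe_iff] at this
  linarith

lemma w_sub_comm (x y : K) : v.w (x - y) = v.w (y - x) := by
  rw [← v.map_neg', neg_sub]

variable {v}

lemma le_w_add {x y : K} {M : EReal} (hx : M ≤ v.w x) (hy : M ≤ v.w y) : M ≤ v.w (x + y) :=
  (le_min hx hy).trans (v.add_le' x y)

lemma le_w_sub {x y : K} {M : EReal} (hx : M ≤ v.w x) (hy : M ≤ v.w y) : M ≤ v.w (x - y) := by
  rw [sub_eq_add_neg]
  exact le_w_add hx (by rwa [v.map_neg'])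

lemma le_w_sum {ι : Type*} {s : Finset ι} {f : ι → K} {M : EReal} (h : ∀ i ∈ s, M ≤ v.w (f i)) :
    M ≤ v.w (∑ i ∈ s, f i) := by
  classical
  induction s using Finset.induction with
  | empty => simp [v.map_zero']
  | insert a s ha ih =>
    rw [Finset.sum_insert ha]
    exact le_w_add (h a (Finset.mem_insert_self a s))
      (ih fun i hi => h i (Finset.mem_insert_of_mem hi))

lemma le_w_mul {x y : K} {a b c : ℝ} (hc : c ≤ a + b) (hx : (a : EReal) ≤ v.w x)
    (hy : (b : EReal) ≤ v.w y) : (c : EReal) ≤ v.w (x * y) := by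
  rw [v.map_mul']
  calc (c : EReal) ≤ ((a + b : ℝ) : EReal) := EReal.coe_le_coe_iff.mpr hc
    _ = a + b := EReal.coe_add a b
    _ ≤ v.w x + v.w y := add_le_add hx hy

lemma le_w_inv_mul {x y : K} {s c : ℝ} (hy : v.w y = s) (hx : ((s + c : ℝ) : EReal) ≤ v.w x) :
    (c : EReal) ≤ v.w (y⁻¹ * x) := by
  have hy0 : y ≠ 0 := by
    rintro rfl
    rw [v.map_zero'] at hy
    exact EReal.coe_ne_top s hy.symm
  obtain ⟨b, hb⟩ := v.finite' y⁻¹ (inv_ne_zero hy0)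
  have hsb : b = -s := by
    have h := v.map_mul' y y⁻¹
    rw [mul_inv_cancel₀ hy0, v.map_one', hy, hb, ← EReal.coe_add] at h
    have : (0 : ℝ) = s + b := by exact_mod_cast h
    linarith
  exact le_w_mul (a := b) (by linarith) hb.ge hx

end Basic

section Limits

def HasLimit (s : ℕ → K) (L : K) : Prop :=
  ∀ M : ℝ, ∃ N : ℕ, ∀ n ≥ N, (M : EReal) ≤ v.w (s n - L)

variable {v}

lemma hasLimit_const (c : K) : v.HasLimit (fun _ => c) c :=
  fun _ => ⟨0, fun _ _ => by simp [v.map_zero']⟩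

lemma HasLimit.unique {s : ℕ → K} {L L' : K} (h : v.HasLimit s L) (h' : v.HasLimit s L') :
    L = L' := by
  refine sub_eq_zero.mp (v.eq_zero_of_forall_le_w fun M => ?_)
  obtain ⟨N, hN⟩ := h M
  obtain ⟨N', hN'⟩ := h' M
  have e : L - L' = (s (max N N') - L') - (s (max N N') - L) := by ring
  rw [e]
  exact le_w_sub (hN' _ (le_max_right _ _)) (hN _ (le_max_left _ _))

lemma HasLimit.add {s t : ℕ → K} {L L' : K} (h : v.HasLimit s L) (h' : v.HasLimit t L') :
    v.HasLimit (fun n => s n + t n) (L + L') := by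
  intro M
  obtain ⟨N, hN⟩ := h M
  obtain ⟨N', hN'⟩ := h' M
  refine ⟨max N N', fun n hn => ?_⟩
  rw [add_sub_add_comm]
  exact le_w_add (hN n (le_of_max_le_left hn)) (hN' n (le_of_max_le_right hn))

lemma HasLimit.neg {s : ℕ → K} {L : K} (h : v.HasLimit s L) : v.HasLimit (fun n => -s n) (-L) :=
  fun M => (h M).imp fun _ hN n hn => by rw [← neg_sub', v.map_neg']; exact hN n hn

lemma HasLimit.sub {s t : ℕ → K} {L L' : K} (h : v.HasLimit s L) (h' : v.HasLimit t L') :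
    v.HasLimit (fun n => s n - t n) (L - L') := by
  simpa only [sub_eq_add_neg] using h.add h'.neg

lemma HasLimit.const_mul {s : ℕ → K} {L : K} (c : K) (h : v.HasLimit s L) :
    v.HasLimit (fun n => c * s n) (c * L) := by
  rcases eq_or_ne c 0 with rfl | hc
  · simpa using hasLimit_const (v := v) 0
  obtain ⟨a, ha⟩ := v.finite' c hc
  intro M
  refine (h (M - a)).imp fun N hN n hn => ?_
  rw [← mul_sub]
  exact le_w_mul (a := a) (by linarith) ha.ge (hN n hn)

lemma HasLimit.comp_add {s : ℕ → K} {L : K} (h : v.HasLimit s L) (k : ℕ) :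
    v.HasLimit (fun n => s (n + k)) L :=
  fun M => (h M).imp fun _ hN n hn => hN (n + k) (by omega)

lemma hasLimit_sum {ι : Type*} (s : Finset ι) {f : ι → ℕ → K} {L : ι → K}
    (h : ∀ i ∈ s, v.HasLimit (f i) (L i)) :
    v.HasLimit (fun n => ∑ i ∈ s, f i n) (∑ i ∈ s, L i) := by
  classical
  induction s using Finset.induction with
  | empty => simpa using hasLimit_const (v := v) 0
  | insert a s ha ih =>
    simpa only [Finset.sum_insert ha] using
      (h a (Finset.mem_insert_self a s)).add (ih fun i hi => h i (Finset.mem_insert_of_mem hi))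

lemma HasLimit.le_w {s : ℕ → K} {L : K} {B : ℝ} (h : v.HasLimit s L) {N : ℕ}
    (hb : ∀ n ≥ N, (B : EReal) ≤ v.w (s n)) : (B : EReal) ≤ v.w L := by
  obtain ⟨N', hN'⟩ := h B
  have e : L = s (max N N') - (s (max N N') - L) := by ring
  rw [e]
  exact le_w_sub (hb _ (le_max_left _ _)) (hN' _ (le_max_right _ _))

end Limits

section Series

def HasSum (a : ℕ → K) (L : K) : Prop :=
  v.HasLimit (fun n => ∑ m ∈ Finset.range n, a m) L

open Classical in
noncomputable def tsum (a : ℕ → K) : K :=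
  if h : ∃ L, v.HasSum a L then h.choose else 0

variable {v}

lemma hasSum_tsum {a : ℕ → K} (h : ∃ L, v.HasSum a L) : v.HasSum a (v.tsum a) := by
  rw [tsum, dif_pos h]
  exact h.choose_spec

lemma exists_hasSum (hcomp : v.IsComplete) {a : ℕ → K}
    (h : ∀ M : ℝ, ∃ N, ∀ m ≥ N, (M : EReal) ≤ v.w (a m)) : ∃ L, v.HasSum a L := by
  refine hcomp _ fun M => ?_
  obtain ⟨N, hN⟩ := h M
  have key : ∀ m n, N ≤ m → m ≤ n →
      (M : EReal) ≤ v.w (∑ i ∈ Finset.range n, a i - ∑ i ∈ Finset.range m, a i) := by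
    intro m n hm hmn
    rw [Finset.sum_range_sub_sum_range hmn]
    exact le_w_sum fun i hi => hN i (hm.trans (Finset.mem_filter.mp hi).2)
  refine ⟨N, fun m hm n hn => ?_⟩
  rcases le_total m n with hmn | hnm
  · rw [v.w_sub_comm]; exact key m n hm hmn
  · exact key n m hn hnm

lemma HasSum.le_w {a : ℕ → K} {L : K} {B : ℝ} (h : v.HasSum a L)
    (hb : ∀ m, (B : EReal) ≤ v.w (a m)) : (B : EReal) ≤ v.w L :=
  HasLimit.le_w h (N := 0) fun _ _ => le_w_sum fun m _ => hb m

lemma HasSum.le_w_sub_zero {a : ℕ → K} {L : K} {B : ℝ} (h : v.HasSum a L)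
    (hb : ∀ m, 1 ≤ m → (B : EReal) ≤ v.w (a m)) : (B : EReal) ≤ v.w (L - a 0) := by
  have htail : v.HasSum (fun m => a (m + 1)) (L - a 0) := by
    have e : (fun n => ∑ m ∈ Finset.range n, a (m + 1))
        = fun n => ∑ m ∈ Finset.range (n + 1), a m - a 0 :=
      funext fun n => by rw [Finset.sum_range_succ']; ring
    rw [HasSum, e]
    exact (HasLimit.comp_add h 1).sub (hasLimit_const (a 0))
  exact htail.le_w fun m => hb (m + 1) (by omega)

lemma HasSum.sub {a b : ℕ → K} {L L' : K} (h : v.HasSum a L) (h' : v.HasSum b L') :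
    v.HasSum (fun m => a m - b m) (L - L') := by
  simpa only [HasSum, Finset.sum_sub_distrib] using HasLimit.sub h h'

end Series

section Contraction

def WeightedBound (u : ℕ → K) (d : ℕ) (r t : ℝ) : Prop :=
  ∀ l < d, ((((d : ℝ) - l) * r + t : ℝ) : EReal) ≤ v.w (u l)

variable {v} {d : ℕ} {r t : ℝ}

lemma weightedBound_zero : v.WeightedBound 0 d r t :=
  fun _ _ => by simp [v.map_zero']

lemma WeightedBound.mono {u : ℕ → K} {t' : ℝ} (h : v.WeightedBound u d r t) (ht : t' ≤ t) :
    v.WeightedBound u d r t' :=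
  fun l hl => (EReal.coe_le_coe_iff.mpr (by linarith)).trans (h l hl)

lemma WeightedBound.add {u u' : ℕ → K} (h : v.WeightedBound u d r t)
    (h' : v.WeightedBound u' d r t) : v.WeightedBound (u + u') d r t :=
  fun l hl => le_w_add (h l hl) (h' l hl)

lemma WeightedBound.sub_comm {u u' : ℕ → K} (h : v.WeightedBound (u - u') d r t) :
    v.WeightedBound (u' - u) d r t :=
  fun l hl => by simpa only [Pi.sub_apply, v.w_sub_comm] using h l hl

variable (v) in
structure IsWeightedContraction (T : (ℕ → K) → ℕ → K) (d : ℕ) (r δ : ℝ) : Prop where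
  apply_of_le : ∀ u l, d ≤ l → T u l = 0
  mapsTo : ∀ u, v.WeightedBound u d r 0 → v.WeightedBound (T u) d r 0
  contract : ∀ u u' t, v.WeightedBound u d r 0 → v.WeightedBound u' d r 0 →
    v.WeightedBound (u - u') d r t → v.WeightedBound (T u - T u') d r (t + δ)

namespace IsWeightedContraction

variable {T : (ℕ → K) → ℕ → K} {δ : ℝ} (hT : v.IsWeightedContraction T d r δ)
include hT

lemma iterate_bound (k : ℕ) : v.WeightedBound (T^[k] 0) d r 0 := by
  induction k with
  | zero => exact weightedBound_zero
  | succ k ih => rw [Function.iterate_succ_apply']; exact hT.mapsTo _ ih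

lemma iterate_succ_sub (k : ℕ) : v.WeightedBound (T^[k + 1] 0 - T^[k] 0) d r (k * δ) := by
  induction k with
  | zero => simpa using hT.mapsTo 0 weightedBound_zero
  | succ k ih =>
    have h := (hT.contract _ _ _ (hT.iterate_bound (k + 1)) (hT.iterate_bound k) ih).mono
      (t' := ((k + 1 : ℕ) : ℝ) * δ) (by push_cast; linarith)
    rwa [← Function.iterate_succ_apply' T (k + 1), ← Function.iterate_succ_apply' T k] at h

lemma iterate_sub (hδ : 0 ≤ δ) {k m : ℕ} (hkm : k ≤ m) :
    v.WeightedBound (T^[m] 0 - T^[k] 0) d r (k * δ) := by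
  induction m, hkm using Nat.le_induction with
  | base => simpa using weightedBound_zero (v := v)
  | succ m hkm ih =>
    have e : T^[m + 1] 0 - T^[k] 0 = (T^[m + 1] 0 - T^[m] 0) + (T^[m] 0 - T^[k] 0) := by abel
    rw [e]
    refine ((hT.iterate_succ_sub m).mono ?_).add ih
    exact mul_le_mul_of_nonneg_right (by exact_mod_cast hkm) hδ

lemma iterate_apply_of_le (k : ℕ) {l : ℕ} (hl : d ≤ l) : T^[k] 0 l = 0 := by
  cases k with
  | zero => rfl
  | succ k => exact (congrFun (Function.iterate_succ_apply' T k 0) l).trans (hT.apply_of_le _ l hl)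

lemma exists_hasLimit_iterate (hcomp : v.IsComplete) (hr : 0 ≤ r) (hδ : 0 < δ) (l : ℕ) :
    ∃ L, v.HasLimit (fun k => T^[k] 0 l) L := by
  refine hcomp _ fun M => ?_
  rcases lt_or_ge l d with hl | hl
  · have hM : ∀ k m, ⌈M / δ⌉₊ ≤ k → k ≤ m → (M : EReal) ≤ v.w (T^[m] 0 l - T^[k] 0 l) := by
      intro k m hk hkm
      refine (EReal.coe_le_coe_iff.mpr ?_).trans (hT.iterate_sub hδ.le hkm l hl)
      have := (Nat.le_ceil (M / δ)).trans (show (⌈M / δ⌉₊ : ℝ) ≤ k by exact_mod_cast hk)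
      rw [div_le_iff₀ hδ] at this
      nlinarith [(show (l : ℝ) ≤ d by exact_mod_cast hl.le)]
    refine ⟨⌈M / δ⌉₊, fun m hm n hn => ?_⟩
    rcases le_total m n with h | h
    · rw [v.w_sub_comm]; exact hM m n hm h
    · exact hM n m hn h
  · exact ⟨0, fun m _ n _ => by
      simp [hT.iterate_apply_of_le m hl, hT.iterate_apply_of_le n hl, v.map_zero']⟩

lemma exists_fixedPoint (hcomp : v.IsComplete) (hr : 0 ≤ r) (hδ : 0 < δ) :
    ∃ u, v.WeightedBound u d r 0 ∧ T u = u := by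
  choose L hL using hT.exists_hasLimit_iterate hcomp hr hδ
  have hLx : ∀ k, v.WeightedBound (L - T^[k] 0) d r (k * δ) := fun k l hl =>
    ((hL l).sub (hasLimit_const _)).le_w fun m hm => hT.iterate_sub hδ.le hm l hl
  have hL0 : v.WeightedBound L d r 0 := by simpa using hLx 0
  refine ⟨L, hL0, funext fun l => ?_⟩
  rcases lt_or_ge l d with hl | hl
  · refine sub_eq_zero.mp (v.eq_zero_of_forall_le_w fun M => ?_)
    obtain ⟨k, hk⟩ := exists_nat_ge (M / δ)
    rw [div_le_iff₀ hδ] at hk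
    have e : T L l - L l = (T L - T (T^[k] 0)) l + (T^[k + 1] 0 - L) l := by
      simp only [Pi.sub_apply, Function.iterate_succ_apply']; ring
    rw [e]
    have hc := hT.contract _ _ _ hL0 (hT.iterate_bound k) (hLx k) l hl
    have hs := (hLx (k + 1)).sub_comm l hl
    refine le_w_add ((EReal.coe_le_coe_iff.mpr ?_).trans hc)
      ((EReal.coe_le_coe_iff.mpr ?_).trans hs)
    all_goals
      push_cast
      nlinarith [(show (l : ℝ) ≤ d by exact_mod_cast hl.le)]
  · rw [hT.apply_of_le _ l hl]
    refine HasLimit.unique (hasLimit_const (v := v) 0) ?_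
    simpa [hT.iterate_apply_of_le _ hl] using hL l

end IsWeightedContraction

end Contraction

section WeightedSeries

variable {v} {r t : ℝ}

lemma le_w_coeff_mul {A B : K⟦X⟧} {n : ℕ} {c : ℝ} (a b : ℕ → ℝ)
    (hA : ∀ i ≤ n, (a i : EReal) ≤ v.w (coeff i A)) (hB : ∀ j ≤ n, (b j : EReal) ≤ v.w (coeff j B))
    (hab : ∀ i j, i + j = n → c ≤ a i + b j) : (c : EReal) ≤ v.w (coeff n (A * B)) := by
  rw [coeff_mul]
  refine le_w_sum fun p hp => ?_
  have hp := Finset.HasAntidiagonal.mem_antidiagonal.mp hp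
  exact le_w_mul (hab _ _ hp) (hA _ (by omega)) (hB _ (by omega))

lemma le_w_coeff_inv {A : K⟦X⟧} (h0 : constantCoeff A = 1)
    (hA : ∀ n : ℕ, ((n * r : ℝ) : EReal) ≤ v.w (coeff n A)) (n : ℕ) :
    ((n * r : ℝ) : EReal) ≤ v.w (coeff n A⁻¹) := by
  induction n using Nat.strong_induction_on with
  | _ n ih =>
    rw [coeff_inv, h0, inv_one]
    split_ifs with hn
    · simp [hn, v.map_one']
    · rw [neg_one_mul, v.map_neg']
      refine le_w_sum fun p hp => ?_
      have hp := Finset.HasAntidiagonal.mem_antidiagonal.mp hp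
      split_ifs with hlt
      · exact le_w_mul (by rw [← hp]; push_cast; linarith) (hA p.1) (ih p.2 hlt)
      · simp [v.map_zero']

lemma le_w_coeff_inv_sub_inv {A B : K⟦X⟧} (hA0 : constantCoeff A = 1) (hB0 : constantCoeff B = 1)
    (hA : ∀ n : ℕ, ((n * r : ℝ) : EReal) ≤ v.w (coeff n A))
    (hB : ∀ n : ℕ, ((n * r : ℝ) : EReal) ≤ v.w (coeff n B))
    (hAB : ∀ n : ℕ, ((n * r + t : ℝ) : EReal) ≤ v.w (coeff n (A - B))) (n : ℕ) :
    ((n * r + t : ℝ) : EReal) ≤ v.w (coeff n (A⁻¹ - B⁻¹)) := by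
  have e : A⁻¹ - B⁻¹ = A⁻¹ * B⁻¹ * -(A - B) := by
    have hA' := PowerSeries.mul_inv_cancel A (by simp [hA0])
    have hB' := PowerSeries.mul_inv_cancel B (by simp [hB0])
    linear_combination (-A⁻¹) * hB' + B⁻¹ * hA'
  rw [e]
  refine le_w_coeff_mul (fun i => i * r) (fun j => j * r + t) (fun i _ => ?_)
    (fun j _ => by rw [map_neg, v.map_neg']; exact hAB j)
    (fun i j h => by rw [← h]; push_cast; linarith)
  exact le_w_coeff_mul (fun i => i * r) (fun j => j * r) (fun i _ => le_w_coeff_inv hA0 hA i)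
    (fun j _ => le_w_coeff_inv hB0 hB j) (fun i j h => by rw [← h]; push_cast; linarith)

end WeightedSeries

section Convolution

variable {v}

lemma sum_coeff_mul_eq_of_hasSum {V S : K⟦X⟧} (hVS : V * S = 1) {d : ℕ}
    (hV : ∀ k, d < k → coeff k V = 0) {a G : ℕ → K}
    (hG : ∀ k ≤ d, v.HasSum (fun m => a (k + m) * coeff m S) (G k)) :
    ∑ k ∈ Finset.range (d + 1), coeff k V * G k = a 0 := by
  have hlim : v.HasLimit (fun N => ∑ k ∈ Finset.range (d + 1),
      coeff k V * ∑ m ∈ Finset.range (N + (d + 1 - k)), a (k + m) * coeff m S)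
      (∑ k ∈ Finset.range (d + 1), coeff k V * G k) :=
    hasLimit_sum _ fun k hk =>
      ((hG k (Nat.le_of_lt_succ (Finset.mem_range.mp hk))).comp_add _).const_mul _
  simp only [PowerSeries.sum_coeff_mul_sum_range_eq hVS hV] at hlim
  exact hlim.unique (hasLimit_const _)

end Convolution

section Factorization

open Polynomial (monicOf coeff_reflect_monicOf)

/-- `(d, s)` is a vertex of the Newton polygon of `∑ Fⱼ Xʲ`: the line of slope `-r` through it
lies below every other point `(j, w(Fⱼ))` by at least `δ`. -/
structure IsolatedWeightedMin (F : ℕ → K) (d : ℕ) (r δ s : ℝ) : Prop where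
  pos_r : 0 < r
  pos_δ : 0 < δ
  w_eq : v.w (F d) = s
  nonneg : ∀ j, 0 ≤ v.w (F j)
  gap : ∀ j ≠ d, ((s + ((d : ℝ) - j) * r + δ : ℝ) : EReal) ≤ v.w (F j)

/-- For `q = monicOf u d`, the expansion of `1 / (X⁻ᵈ q)` in powers of `X⁻¹`. -/
noncomputable def reflectInv (u : ℕ → K) (d : ℕ) : K⟦X⟧ :=
  ((monicOf u d).reflect d : K⟦X⟧)⁻¹

/-- The quotient of `∑ Fⱼ Xʲ` by `q = monicOf u d`, computed in `K((X⁻¹))` and truncated to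
nonnegative powers. -/
noncomputable def cofactor (F : ℕ → K) (d : ℕ) (u : ℕ → K) : K⟦X⟧ :=
  PowerSeries.mk fun i => v.tsum fun m => F (i + d + m) * coeff m (reflectInv u d)

/-- The equation `Fₙ = coeff n (q * g)` for `n < d`, solved for its term `uₙ F_d`. -/
noncomputable def step (F : ℕ → K) (d : ℕ) (u : ℕ → K) (n : ℕ) : K :=
  if n < d then (F d)⁻¹ * (F n - coeff n (PowerSeries.mk u * (v.cofactor F d u - C (F d)))) else 0

variable {v} {d : ℕ} {r t : ℝ} {u u' : ℕ → K}

lemma constantCoeff_reflect_monicOf (u : ℕ → K) (d : ℕ) :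
    constantCoeff ((monicOf u d).reflect d : K⟦X⟧) = 1 := by
  rw [← coeff_zero_eq_constantCoeff_apply, Polynomial.coeff_coe, coeff_reflect_monicOf, if_pos rfl]

lemma le_w_coeff_reflect_monicOf (hu : v.WeightedBound u d r 0) (k : ℕ) :
    ((k * r : ℝ) : EReal) ≤ v.w (coeff k ((monicOf u d).reflect d : K⟦X⟧)) := by
  rw [Polynomial.coeff_coe, coeff_reflect_monicOf]
  split_ifs with h0 hkd
  · simp [h0, v.map_one']
  · convert hu (d - k) (by omega) using 2
    push_cast [Nat.cast_sub hkd]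
    ring
  · simp [v.map_zero']

lemma le_w_coeff_reflect_monicOf_sub (hdiff : v.WeightedBound (u - u') d r t) (k : ℕ) :
    ((k * r + t : ℝ) : EReal) ≤
      v.w (coeff k ((monicOf u d).reflect d - (monicOf u' d).reflect d : K⟦X⟧)) := by
  rw [map_sub, Polynomial.coeff_coe, Polynomial.coeff_coe, coeff_reflect_monicOf,
    coeff_reflect_monicOf]
  split_ifs with h0 hkd
  · simp [v.map_zero']
  · have := hdiff (d - k) (by omega)
    rw [Pi.sub_apply] at this
    convert this using 2
    push_cast [Nat.cast_sub hkd]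
    ring
  · simp [v.map_zero']

lemma constantCoeff_reflectInv (u : ℕ → K) (d : ℕ) : constantCoeff (reflectInv u d) = 1 := by
  rw [← coeff_zero_eq_constantCoeff_apply, reflectInv, coeff_inv, if_pos rfl,
    constantCoeff_reflect_monicOf, inv_one]

lemma le_w_coeff_reflectInv (hu : v.WeightedBound u d r 0) (m : ℕ) :
    ((m * r : ℝ) : EReal) ≤ v.w (coeff m (reflectInv u d)) :=
  le_w_coeff_inv (constantCoeff_reflect_monicOf u d) (le_w_coeff_reflect_monicOf hu) m

lemma le_w_coeff_reflectInv_sub (hu : v.WeightedBound u d r 0) (hu' : v.WeightedBound u' d r 0)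
    (hdiff : v.WeightedBound (u - u') d r t) (m : ℕ) :
    ((m * r + t : ℝ) : EReal) ≤ v.w (coeff m (reflectInv u d - reflectInv u' d)) :=
  le_w_coeff_inv_sub_inv (constantCoeff_reflect_monicOf u d) (constantCoeff_reflect_monicOf u' d)
    (le_w_coeff_reflect_monicOf hu) (le_w_coeff_reflect_monicOf hu')
    (le_w_coeff_reflect_monicOf_sub hdiff) m

namespace IsolatedWeightedMin

variable {F : ℕ → K} {δ s : ℝ} (hF : v.IsolatedWeightedMin F d r δ s) (hcomp : v.IsComplete)
include hF

lemma le_w_of_ne {j : ℕ} (hj : j ≠ d) {c : ℝ} (hc : c ≤ s + ((d : ℝ) - j) * r + δ) :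
    (c : EReal) ≤ v.w (F j) :=
  (EReal.coe_le_coe_iff.mpr hc).trans (hF.gap j hj)

include hcomp in
lemma hasSum_cofactor (hu : v.WeightedBound u d r 0) (i : ℕ) :
    v.HasSum (fun m => F (i + d + m) * coeff m (reflectInv u d)) (coeff i (v.cofactor F d u)) := by
  rw [cofactor, coeff_mk]
  refine hasSum_tsum (exists_hasSum hcomp fun M => ⟨⌈M / r⌉₊, fun m hm => ?_⟩)
  refine le_w_mul (a := 0) ?_ (hF.nonneg _) (le_w_coeff_reflectInv hu m)
  have := (Nat.le_ceil (M / r)).trans (show (⌈M / r⌉₊ : ℝ) ≤ m by exact_mod_cast hm)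
  rw [div_le_iff₀ hF.pos_r] at this
  linarith

include hcomp in
lemma le_w_coeff_cofactor (hu : v.WeightedBound u d r 0) (i : ℕ) :
    (0 : EReal) ≤ v.w (coeff i (v.cofactor F d u)) := by
  have := (hF.hasSum_cofactor hcomp hu i).le_w (B := 0) fun m =>
    le_w_mul (a := 0) (by nlinarith [hF.pos_r, (Nat.cast_nonneg m : (0 : ℝ) ≤ m)])
      (hF.nonneg _) (le_w_coeff_reflectInv hu m)
  simpa using this

include hcomp in
lemma le_w_coeff_cofactor_sub_C (hu : v.WeightedBound u d r 0) (i : ℕ) :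
    (((s + δ - i * r) : ℝ) : EReal) ≤ v.w (coeff i (v.cofactor F d u - C (F d))) := by
  rw [map_sub, coeff_C]
  have hterm : ∀ m, i + m ≠ 0 →
      (((s + δ - i * r) : ℝ) : EReal) ≤ v.w (F (i + d + m) * coeff m (reflectInv u d)) :=
    fun m hm => le_w_mul (by push_cast; linarith) (hF.le_w_of_ne (j := i + d + m) (by omega) le_rfl)
      (le_w_coeff_reflectInv hu m)
  split_ifs with hi
  · subst hi
    simpa [constantCoeff_reflectInv] using
      (hF.hasSum_cofactor hcomp hu 0).le_w_sub_zero fun m hm => hterm m (by omega)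
  · simpa using (hF.hasSum_cofactor hcomp hu i).le_w fun m => hterm m (by omega)

include hcomp in
lemma le_w_coeff_cofactor_sub_cofactor (hu : v.WeightedBound u d r 0)
    (hu' : v.WeightedBound u' d r 0) (hdiff : v.WeightedBound (u - u') d r t) (i : ℕ) :
    (((s + δ - i * r + t) : ℝ) : EReal) ≤
      v.w (coeff i (v.cofactor F d u - v.cofactor F d u')) := by
  rw [map_sub]
  refine ((hF.hasSum_cofactor hcomp hu i).sub (hF.hasSum_cofactor hcomp hu' i)).le_w fun m => ?_
  rw [← mul_sub, ← map_sub]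
  rcases Nat.eq_zero_or_pos m with rfl | hm
  · simp [constantCoeff_reflectInv, v.map_zero']
  · exact le_w_mul (by push_cast; linarith) (hF.le_w_of_ne (j := i + d + m) (by omega) le_rfl)
      (le_w_coeff_reflectInv_sub hu hu' hdiff m)

include hcomp in
lemma weightedBound_step (hu : v.WeightedBound u d r 0) :
    v.WeightedBound (v.step F d u) d r 0 := by
  intro n hn
  rw [step, if_pos hn]
  refine le_w_inv_mul hF.w_eq (le_w_sub (hF.le_w_of_ne hn.ne (by linarith [hF.pos_δ])) ?_)
  refine le_w_coeff_mul (fun i => ((d : ℝ) - i) * r) (fun j => s + δ - j * r) (fun i hi => ?_)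
    (fun j _ => hF.le_w_coeff_cofactor_sub_C hcomp hu j) (fun i j hij => ?_)
  · simpa using hu i (by omega)
  · rw [← hij]; push_cast; linarith [hF.pos_δ]

include hcomp in
lemma weightedBound_step_sub (hu : v.WeightedBound u d r 0) (hu' : v.WeightedBound u' d r 0)
    (hdiff : v.WeightedBound (u - u') d r t) :
    v.WeightedBound (v.step F d u - v.step F d u') d r (t + δ) := by
  intro n hn
  simp only [Pi.sub_apply, step, if_pos hn]
  rw [← mul_sub, sub_sub_sub_cancel_left, ← map_sub]
  refine le_w_inv_mul hF.w_eq ?_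
  set E := v.cofactor F d u - C (F d)
  set E' := v.cofactor F d u' - C (F d)
  have e : PowerSeries.mk u' * E' - PowerSeries.mk u * E =
      -((PowerSeries.mk u - PowerSeries.mk u') * E + PowerSeries.mk u' * (E - E')) := by ring
  rw [e, map_neg, v.map_neg', map_add, sub_sub_sub_cancel_right]
  refine le_w_add (le_w_coeff_mul (fun i => ((d : ℝ) - i) * r + t) (fun j => s + δ - j * r)
    (fun i hi => ?_) (fun j _ => hF.le_w_coeff_cofactor_sub_C hcomp hu j) (fun i j hij => ?_))
    (le_w_coeff_mul (fun i => ((d : ℝ) - i) * r) (fun j => s + δ - j * r + t)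
    (fun i hi => ?_) (fun j _ => hF.le_w_coeff_cofactor_sub_cofactor hcomp hu hu' hdiff j)
    (fun i j hij => ?_))
  · simpa using hdiff i (by omega)
  · rw [← hij]; push_cast; linarith
  · simpa using hu' i (by omega)
  · rw [← hij]; push_cast; linarith

include hcomp in
lemma isWeightedContraction : v.IsWeightedContraction (v.step F d) d r δ where
  apply_of_le _ _ hl := by rw [step, if_neg (by omega)]
  mapsTo _ hu := hF.weightedBound_step hcomp hu
  contract _ _ _ hu hu' hdiff := hF.weightedBound_step_sub hcomp hu hu' hdiff

include hcomp in
lemma coeff_monicOf_mul_cofactor (hu : v.WeightedBound u d r 0) (hfix : v.step F d u = u)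
    (n : ℕ) : coeff n ((monicOf u d : K⟦X⟧) * v.cofactor F d u) = F n := by
  rcases lt_or_ge n d with hn | hn
  · rw [Polynomial.coeff_coe_monicOf_mul_of_lt u hn]
    have h := congrFun hfix n
    rw [step, if_pos hn, mul_sub (PowerSeries.mk u), map_sub, coeff_mul_C, coeff_mk] at h
    have hFd : F d ≠ 0 := fun h0 => by simpa [h0, v.map_zero'] using hF.w_eq
    field_simp at h
    linear_combination -h
  · rw [Polynomial.coeff_coe_mul_eq_sum_reflect (Polynomial.natDegree_monicOf_le u d) hn]
    refine (sum_coeff_mul_eq_of_hasSum (v := v) (S := reflectInv u d) (a := fun p => F (n + p))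
      (PowerSeries.mul_inv_cancel _ (by rw [constantCoeff_reflect_monicOf]; exact one_ne_zero))
      (fun k hk => ?_) (fun k _ => ?_)).trans (by simp)
    · rw [Polynomial.coeff_coe, coeff_reflect_monicOf, if_neg (by omega), if_neg (by omega)]
    · have e : n - d + k + d = n + k := by omega
      simpa only [e, add_assoc] using hF.hasSum_cofactor hcomp hu (n - d + k)

include hcomp in
theorem exists_factorization :
    ∃ u : ℕ → K, v.WeightedBound u d r 0 ∧ (∀ l, d ≤ l → u l = 0) ∧
      (∀ i, 0 ≤ v.w (coeff i (v.cofactor F d u))) ∧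
      PowerSeries.mk F = (monicOf u d : K⟦X⟧) * v.cofactor F d u := by
  obtain ⟨u, hu, hfix⟩ :=
    (hF.isWeightedContraction hcomp).exists_fixedPoint hcomp hF.pos_r.le hF.pos_δ
  refine ⟨u, hu, fun l hl => ?_, hF.le_w_coeff_cofactor hcomp hu, ?_⟩
  · rw [← hfix, step, if_neg (by omega)]
  · ext n
    rw [coeff_mk, hF.coeff_monicOf_mul_cofactor hcomp hu hfix n]

end IsolatedWeightedMin

end Factorization

section ValuationRing

/-- The maximal ideal `𝔪` of the valuation ring. -/
def maxIdeal : Ideal v.subring where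
  carrier := {x | 0 < v.w x}
  zero_mem' := by simp [v.map_zero']
  add_mem' {x y} hx hy := (lt_min hx hy).trans_le (v.add_le' x y)
  smul_mem' c x hx := by
    change 0 < v.w (c * x : K)
    rw [v.map_mul']
    exact hx.trans_le (le_add_of_nonneg_left c.2)

lemma mem_maxIdeal {x : v.subring} : x ∈ v.maxIdeal ↔ 0 < v.w x := Iff.rfl

instance maxIdeal_isPrime : v.maxIdeal.IsPrime where
  ne_top' h := by simpa [mem_maxIdeal, v.map_one'] using (Ideal.eq_top_iff_one _).mp h
  mem_or_mem' {x y} hxy := by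
    simp only [mem_maxIdeal, Subring.coe_mul, v.map_mul'] at hxy ⊢
    by_contra! h
    have hx := le_antisymm h.1 x.2
    have hy := le_antisymm h.2 y.2
    simp [hx, hy] at hxy

lemma wR_nonneg (g : PowerSeries v.subring) : 0 ≤ v.wR g :=
  le_iInf fun i => (coeff i g).2

lemma wR_le_wR_mul (p g : PowerSeries v.subring) : v.wR g ≤ v.wR (p * g) := by
  refine le_iInf fun n => ?_
  rw [coeff_mul]
  push_cast
  refine le_w_sum fun x _ => ?_
  rw [v.map_mul']
  calc v.wR g = 0 + v.wR g := (zero_add _).symm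
    _ ≤ _ := add_le_add (coeff x.1 p).2 (iInf_le _ x.2)

variable {v}

/-- Capping the valuations at `1` makes them real, so that `exists_isolated_min_add_mul`
applies. -/
lemma exists_isolatedWeightedMin {F : ℕ → K} (hpos : ∀ j, 0 < v.w (F j))
    (hinf : ⨅ j, v.w (F j) = 0) :
    ∃ (d : ℕ) (r δ s : ℝ), 0 < d ∧ v.IsolatedWeightedMin F d r δ s := by
  set t : ℕ → ℝ := fun j => (min (v.w (F j)) 1).toReal
  have ht : ∀ j, (t j : EReal) = min (v.w (F j)) 1 := fun j =>
    EReal.coe_toReal ((min_le_right _ _).trans_lt (EReal.coe_lt_top 1)).ne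
      (lt_min (hpos j) zero_lt_one).ne_bot
  have ht_le : ∀ j, (t j : EReal) ≤ v.w (F j) := fun j => (ht j).trans_le (min_le_left _ _)
  have ht_pos : ∀ j, 0 < t j := fun j => by
    have := lt_min (hpos j) zero_lt_one
    rw [← ht j] at this
    exact_mod_cast this
  have ht_one : ∀ j, t j ≤ 1 := fun j => by
    have := min_le_right (v.w (F j)) 1
    rw [← ht j] at this
    exact_mod_cast this
  have ht_inf : ∀ ε > 0, ∃ j, t j < ε := fun ε hε => by
    obtain ⟨j, hj⟩ := iInf_lt_iff.mp (hinf.trans_lt (EReal.coe_pos.mpr hε))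
    exact ⟨j, by exact_mod_cast (ht_le j).trans_lt hj⟩
  obtain ⟨d, r, δ, hd, hr, hδ, hgap⟩ := exists_isolated_min_add_mul t ht_pos ht_inf
  have hd1 : t d < 1 := by
    have := hgap 0 hd.ne
    push_cast at this
    nlinarith [ht_one 0, mul_nonneg (Nat.cast_nonneg d) hr.le]
  have hwd : v.w (F d) = t d := by
    rcases le_total (v.w (F d)) 1 with h | h
    · rw [ht d, min_eq_left h]
    · have := (ht d).trans (min_eq_right h)
      exact absurd (by exact_mod_cast this) hd1.ne
  refine ⟨d, r, δ, t d, hd, hr, hδ, hwd, fun j => (hpos j).le, fun j hj => ?_⟩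
  exact (EReal.coe_le_coe_iff.mpr (by linarith [hgap j hj])).trans (ht_le j)

open Polynomial (monicOf) in
lemma exists_monicOf_mul (hcomp : v.IsComplete) {f : PowerSeries v.subring} {d : ℕ} {r δ s : ℝ}
    (hF : v.IsolatedWeightedMin (fun j => ((coeff j f : v.subring) : K)) d r δ s) :
    ∃ (u : ℕ → v.subring) (g : PowerSeries v.subring),
      (∀ l < d, 0 < v.w (u l)) ∧ f = (monicOf u d : PowerSeries v.subring) * g := by
  obtain ⟨u, hu, hu_high, hg, hfac⟩ := hF.exists_factorization hcomp
  have hu_nonneg : ∀ l, 0 ≤ v.w (u l) := fun l => by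
    rcases lt_or_ge l d with hl | hl
    · refine (EReal.coe_le_coe_iff.mpr ?_).trans (hu l hl)
      nlinarith [hF.pos_r, (show (l : ℝ) ≤ d by exact_mod_cast hl.le)]
    · simp [hu_high l hl, v.map_zero']
  refine ⟨fun l => ⟨u l, hu_nonneg l⟩, PowerSeries.mk fun i => ⟨_, hg i⟩, fun l hl => ?_, ?_⟩
  · refine lt_of_lt_of_le (EReal.coe_pos.mpr ?_) (hu l hl)
    nlinarith [hF.pos_r, (show (l : ℝ) + 1 ≤ d by exact_mod_cast hl)]
  · refine PowerSeries.map_injective v.subring.subtype Subtype.val_injective ?_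
    rw [map_mul, ← Polynomial.polynomial_map_coe, Polynomial.map_monicOf]
    have hmap_f : PowerSeries.map v.subring.subtype f =
        PowerSeries.mk fun j => ((coeff j f : v.subring) : K) := by
      ext j; simp
    have hmap_g : PowerSeries.map v.subring.subtype (PowerSeries.mk fun i => ⟨_, hg i⟩) =
        v.cofactor (fun j => ((coeff j f : v.subring) : K)) d u := by
      ext i; simp
    rw [hmap_f, hmap_g, hfac]
    rfl

end ValuationRing

end AddRealValuation

theorem statement7_general {K : Type*} [Field K] (v : AddRealValuation K)
    (hcomp : v.IsComplete)
    (f : PowerSeries v.subring) (hwf : v.wR f = 0)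
    (hm : ∀ i : ℕ, 0 < v.w ((PowerSeries.coeff (R := v.subring) i f : v.subring) : K)) :
    ∃ q : Polynomial v.subring, q.Monic ∧ Irreducible q ∧ 0 < q.natDegree ∧
      0 < v.w ((q.coeff 0 : v.subring) : K) ∧
      ∃ g : PowerSeries v.subring,
        f = (q : PowerSeries v.subring) * g ∧
        v.wR g = 0 ∧
        ∀ i : ℕ, 0 < v.w ((PowerSeries.coeff (R := v.subring) i g : v.subring) : K) := by
  obtain ⟨d, r, δ, s, hd, hF⟩ := AddRealValuation.exists_isolatedWeightedMin hm hwf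
  obtain ⟨u, g, hu, hfg⟩ := AddRealValuation.exists_monicOf_mul hcomp hF
  have hu0 : (Polynomial.monicOf u d).coeff 0 ∈ v.maxIdeal := by
    rw [Polynomial.coeff_monicOf, if_neg hd.ne, if_pos hd]
    exact hu 0 hd
  obtain ⟨q, hq, hirr, hq0, c, hc⟩ :=
    (Polynomial.monic_monicOf u d).exists_irreducible_dvd_coeff_zero_mem hu0
  have hfq : f = q * (c * g) := by rw [hfg, hc, Polynomial.coe_mul, mul_assoc]
  refine ⟨q, hq, hirr, hq.natDegree_pos_of_irreducible hirr, hq0, c * g, hfq, ?_, fun i => ?_⟩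
  · exact le_antisymm (hwf ▸ hfq ▸ v.wR_le_wR_mul _ _) (v.wR_nonneg _)
  · exact PowerSeries.coeff_mem_of_monic_mul (P := v.maxIdeal) hq (fun n => hfq ▸ hm n) i

/-- Let `K` be complete with respect to a non-discrete rank-1 valuation,
`R` its valuation ring, `𝔪` its maximal ideal. If `f ∈ R[[X]]` satisfies `w f = 0`
and all coefficients of `f` lie in `𝔪`, then `f` has a monic irreducible polynomial
factor `q ∈ R[X]` of positive degree with constant term in `𝔪`, such that the
quotient `g = f / q` again satisfies `w g = 0` with all coefficients in `𝔪`. -/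
theorem statement7 {K : Type*} [Field K] (v : AddRealValuation K)
    (hcomp : v.IsComplete) (hnd : v.Nondiscrete)
    (f : PowerSeries v.subring) (hwf : v.wR f = 0)
    (hm : ∀ i : ℕ, 0 < v.w ((PowerSeries.coeff (R := v.subring) i f : v.subring) : K)) :
    ∃ q : Polynomial v.subring, q.Monic ∧ Irreducible q ∧ 0 < q.natDegree ∧
      0 < v.w ((q.coeff 0 : v.subring) : K) ∧
      ∃ g : PowerSeries v.subring,
        f = (q : PowerSeries v.subring) * g ∧
        v.wR g = 0 ∧
        ∀ i : ℕ, 0 < v.w ((PowerSeries.coeff (R := v.subring) i g : v.subring) : K) :=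
  statement7_general v hcomp f hwf hm
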